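/- arXiv:2003.00325 — 4 statements merged into one kernel-verified Lean document; each statement's English description precedes it below -/
import Mathlib

section
/- Let M be a topological space with a transitive relation ≪ such that I⁺(p) and I⁻(p) := {q : q ≪ p} are open for all p. Then for any S ⊆ M, the topological boundary ∂I⁺(S) is achronal: there do not exist points q, r ∈ ∂I⁺(S) with q ≪ r. -/
/-!
If `q ≪ r` with `q` in the closure of `I⁺(S)`, then the open set `I⁻(r)` contains `q` and so
meets `I⁺(S)`; by transitivity `r ∈ I⁺(S)`. As `I⁺(S)` is open, it is disjoint from its boundary,
so `r` cannot lie on `∂I⁺(S)`.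
-/

section Chronology

variable {M : Type*} (lt : M → M → Prop)

theorem mem_biUnion_future_of_mem_of_lt (htrans : ∀ p q r : M, lt p q → lt q r → lt p r)
    {S : Set M} {x y : M} (hx : x ∈ ⋃ p ∈ S, {z : M | lt p z}) (hxy : lt x y) :
    y ∈ ⋃ p ∈ S, {z : M | lt p z} := by
  obtain ⟨p, hpS, hpx⟩ := Set.mem_iUnion₂.mp hx
  exact Set.mem_iUnion₂.mpr ⟨p, hpS, htrans p x y hpx hxy⟩

variable [TopologicalSpace M]

theorem mem_of_mem_closure_of_lt (hopenP : ∀ p : M, IsOpen {q : M | lt q p}) {T : Set M}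
    (hT : ∀ x ∈ T, ∀ y, lt x y → y ∈ T) {q r : M} (hq : q ∈ closure T) (hqr : lt q r) :
    r ∈ T := by
  obtain ⟨x, hxr, hxT⟩ := mem_closure_iff.mp hq {x : M | lt x r} (hopenP r) hqr
  exact hT x hxT r hxr

theorem not_lt_of_mem_frontier (hopenP : ∀ p : M, IsOpen {q : M | lt q p}) {T : Set M}
    (hTopen : IsOpen T) (hT : ∀ x ∈ T, ∀ y, lt x y → y ∈ T) {q r : M}
    (hq : q ∈ frontier T) (hr : r ∈ frontier T) : ¬ lt q r := fun hqr =>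
  (hTopen.frontier_eq ▸ hr).2 (mem_of_mem_closure_of_lt lt hopenP hT hq.1 hqr)

end Chronology

/-- The boundary of the chronological future of a set is achronal. -/
theorem frontier_future_achronal {M : Type*} [TopologicalSpace M] (lt : M → M → Prop)
    (htrans : ∀ p q r : M, lt p q → lt q r → lt p r)
    (hopenF : ∀ p : M, IsOpen {q : M | lt p q})
    (hopenP : ∀ p : M, IsOpen {q : M | lt q p})
    (S : Set M) :
    ¬ ∃ q r : M, q ∈ frontier (⋃ p ∈ S, {x : M | lt p x}) ∧
      r ∈ frontier (⋃ p ∈ S, {x : M | lt p x}) ∧ lt q r := by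
  rintro ⟨q, r, hq, hr, hqr⟩
  have hopen : IsOpen (⋃ p ∈ S, {x : M | lt p x}) := isOpen_biUnion fun p _ => hopenF p
  exact not_lt_of_mem_frontier lt hopenP hopen
    (fun _ hx _ hxy => mem_biUnion_future_of_mem_of_lt lt htrans hx hxy) hq hr hqr
end

section
/- With the hypotheses of the previous setting (≪ transitive, I⁺(p) and I⁻(p) open for all p), if q ∈ ∂I⁺(S) then I⁺(q) ⊆ I⁺(S). -/
theorem future_subset_of_mem_closure {M : Type*} [TopologicalSpace M] (lt : M → M → Prop)
    (htrans : ∀ p q r : M, lt p q → lt q r → lt p r)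
    (hopenP : ∀ p : M, IsOpen {q : M | lt q p})
    (S : Set M) (q : M) (hq : q ∈ closure (⋃ p ∈ S, {x : M | lt p x})) :
    {x : M | lt q x} ⊆ ⋃ p ∈ S, {x : M | lt p x} := by
  intro x hqx
  obtain ⟨y, hyx, hyS⟩ := mem_closure_iff.mp hq {y | lt y x} (hopenP x) hqx
  obtain ⟨p, hp, hpy⟩ := Set.mem_iUnion₂.mp hyS
  exact Set.mem_iUnion₂.mpr ⟨p, hp, htrans p y x hpy hyx⟩

theorem future_subset_of_mem_frontier_general {M : Type*} [TopologicalSpace M] (lt : M → M → Prop)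
    (htrans : ∀ p q r : M, lt p q → lt q r → lt p r)
    (hopenP : ∀ p : M, IsOpen {q : M | lt q p})
    (S : Set M) (q : M) (hq : q ∈ frontier (⋃ p ∈ S, {x : M | lt p x})) :
    {x : M | lt q x} ⊆ ⋃ p ∈ S, {x : M | lt p x} :=
  future_subset_of_mem_closure lt htrans hopenP S q hq.1

/-- If `q ∈ ∂I⁺(S)` then `I⁺(q) ⊆ I⁺(S)`. -/
theorem future_subset_of_mem_frontier {M : Type*} [TopologicalSpace M] (lt : M → M → Prop)
    (htrans : ∀ p q r : M, lt p q → lt q r → lt p r)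
    (hopenF : ∀ p : M, IsOpen {q : M | lt p q})
    (hopenP : ∀ p : M, IsOpen {q : M | lt q p})
    (S : Set M) (q : M) (hq : q ∈ frontier (⋃ p ∈ S, {x : M | lt p x})) :
    {x : M | lt q x} ⊆ ⋃ p ∈ S, {x : M | lt p x} :=
  future_subset_of_mem_frontier_general lt htrans hopenP S q hq
end

section
/- Let r : D → ℝ^{N+1} be a C³ immersion with Christoffel symbols Γ^l_{jk}, unit normal n, second fundamental form b_{jk}, and Gauss formula ∂²r/∂u_j∂u_k = Γ^l_{jk} ∂r/∂u_l + b_{jk} n, together with Weingarten-type formula ∂n/∂u_j = −b_j^l ∂r/∂u_l + (components in auxiliary normals n̂_q orthogonal to all tangent vectors). Then equality of mixed third partial derivatives ∂³r/∂u_i∂u_j∂u_k = ∂³r/∂u_j∂u_i∂u_k, together with linear independence of the tangent vectors and normals, implies the Gauss equation: R^l_{ijk} := ∂Γ^l_{jk}/∂u_i − ∂Γ^l_{ik}/∂u_j + Γ^p_{jk}Γ^l_{pi} − Γ^p_{ik}Γ^l_{pj} = b_{jk} b_i^l − b_{ik} b_j^l. -/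
open Set

/-- Partial derivative of a (scalar- or vector-valued) map on `ℝ^{m+1}` in the `j`-th
coordinate direction. -/
noncomputable def pdv {m : ℕ} {F : Type*} [NormedAddCommGroup F] [NormedSpace ℝ F]
    (j : Fin (m + 1)) (f : (Fin (m + 1) → ℝ) → F) (u : Fin (m + 1) → ℝ) : F :=
  fderiv ℝ f u (Pi.single j 1)

/-!
Differentiating the Gauss formula `∂_j ∂_k r = Γ^p_{jk} g_p + b_{jk} n` in `u_i` and substituting
the Gauss formula for `∂_i g_p` and the Weingarten formula for `∂_i n` writes `∂_i ∂_j ∂_k r` in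
the frame `{g_l, n, n̂_q}`; its `g_l`-coefficient is
`∂_i Γ^l_{jk} + Γ^p_{jk} Γ^l_{pi} − b_{jk} b_i^l`. Since `∂_i ∂_j ∂_k r = ∂_j ∂_i ∂_k r` and frame
coefficients are unique, this coefficient is symmetric in `i, j`, which is the Gauss equation.
-/

section PartialDerivatives

variable {m : ℕ} {F : Type*} [NormedAddCommGroup F] [NormedSpace ℝ F]
  {f g : (Fin (m + 1) → ℝ) → F} {u : Fin (m + 1) → ℝ}

theorem pdv_congr_of_eventuallyEq (h : f =ᶠ[nhds u] g) (i : Fin (m + 1)) :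
    pdv i f u = pdv i g u := by
  simp only [pdv, h.fderiv_eq]

theorem pdv_add (hf : DifferentiableAt ℝ f u) (hg : DifferentiableAt ℝ g u) (i : Fin (m + 1)) :
    pdv i (fun x => f x + g x) u = pdv i f u + pdv i g u := by
  simp [pdv, fderiv_fun_add hf hg]

theorem pdv_smul {c : (Fin (m + 1) → ℝ) → ℝ} (hc : DifferentiableAt ℝ c u)
    (hf : DifferentiableAt ℝ f u) (i : Fin (m + 1)) :
    pdv i (fun x => c x • f x) u = pdv i c u • f u + c u • pdv i f u := by
  simp [pdv, fderiv_fun_smul hc hf, add_comm]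

theorem pdv_sum {ι : Type*} (s : Finset ι) {f : ι → (Fin (m + 1) → ℝ) → F}
    (hf : ∀ l ∈ s, DifferentiableAt ℝ (f l) u) (i : Fin (m + 1)) :
    pdv i (fun x => ∑ l ∈ s, f l x) u = ∑ l ∈ s, pdv i (f l) u := by
  simp [pdv, fderiv_fun_sum hf]

theorem ContDiffAt.pdv {k n : WithTop ℕ∞} (hf : ContDiffAt ℝ n f u) (hkn : k + 1 ≤ n)
    (l : Fin (m + 1)) : ContDiffAt ℝ k (pdv l f) u :=
  (hf.fderiv_right hkn).clm_apply contDiffAt_const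

theorem pdv_comm (hf : ContDiffAt ℝ 2 f u) (i j : Fin (m + 1)) :
    pdv i (pdv j f) u = pdv j (pdv i f) u := by
  have hdf : DifferentiableAt ℝ (fderiv ℝ f) u :=
    (hf.fderiv_right (m := 1) (by norm_num)).differentiableAt (by norm_num)
  have hpdv : ∀ v : Fin (m + 1) → ℝ,
      fderiv ℝ (fun x => fderiv ℝ f x v) u = (fderiv ℝ (fderiv ℝ f) u).flip v := fun v => by
    simpa using fderiv_clm_apply hdf (differentiableAt_const v)
  change fderiv ℝ (fun x => fderiv ℝ f x (Pi.single j 1)) u (Pi.single i 1) =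
    fderiv ℝ (fun x => fderiv ℝ f x (Pi.single i 1)) u (Pi.single j 1)
  rw [hpdv, hpdv]
  exact hf.isSymmSndFDerivAt (by simp) _ _

theorem pdv_sum_smul_add_smul {c : Fin (m + 1) → (Fin (m + 1) → ℝ) → ℝ}
    {g : Fin (m + 1) → (Fin (m + 1) → ℝ) → F} {β : (Fin (m + 1) → ℝ) → ℝ}
    {ν : (Fin (m + 1) → ℝ) → F} (hc : ∀ l, DifferentiableAt ℝ (c l) u)
    (hg : ∀ l, DifferentiableAt ℝ (g l) u) (hβ : DifferentiableAt ℝ β u)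
    (hν : DifferentiableAt ℝ ν u) (i : Fin (m + 1)) :
    pdv i (fun x => (∑ l, c l x • g l x) + β x • ν x) u =
      (∑ l, (pdv i (c l) u • g l u + c l u • pdv i (g l) u)) +
        (pdv i β u • ν u + β u • pdv i ν u) := by
  have hsum : DifferentiableAt ℝ (fun x => ∑ l, c l x • g l x) u :=
    DifferentiableAt.fun_sum fun l _ => (hc l).fun_smul (hg l)
  rw [pdv_add hsum (hβ.fun_smul hν), pdv_sum _ (fun l _ => (hc l).fun_smul (hg l)), pdv_smul hβ hν]
  simp only [pdv_smul (hc _) (hg _)]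

end PartialDerivatives

theorem eq_of_frame_expansion_eq {R V ι κ : Type*} [Ring R] [AddCommGroup V] [Module R V]
    [Fintype ι] [Fintype κ] {g : ι → V} {ν : V} {ν' : κ → V}
    (hindep : ∀ (a : ι → R) (β : R) (γ : κ → R),
      (∑ l, a l • g l) + β • ν + (∑ q, γ q • ν' q) = 0 → a = 0 ∧ β = 0 ∧ γ = 0)
    {a a' : ι → R} {β β' : R} {γ γ' : κ → R}
    (h : (∑ l, a l • g l) + β • ν + (∑ q, γ q • ν' q) =
      (∑ l, a' l • g l) + β' • ν + (∑ q, γ' q • ν' q)) :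
    a = a' := by
  refine sub_eq_zero.mp (hindep (a - a') (β - β') (γ - γ') ?_).1
  simp only [Pi.sub_apply, sub_smul, Finset.sum_sub_distrib]
  rw [← sub_eq_zero.mpr h]
  abel

theorem pdv_pdv_pdv_eq_frame {m N s' : ℕ} {D : Set (Fin (m + 1) → ℝ)} (hD : IsOpen D)
    {r : (Fin (m + 1) → ℝ) → (Fin (N + 1) → ℝ)} (hr : ContDiffOn ℝ 3 r D)
    {n : (Fin (m + 1) → ℝ) → (Fin (N + 1) → ℝ)} (hn : ContDiffOn ℝ 2 n D)
    {nhat : Fin s' → (Fin (m + 1) → ℝ) → (Fin (N + 1) → ℝ)}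
    {Γ : Fin (m + 1) → Fin (m + 1) → Fin (m + 1) → (Fin (m + 1) → ℝ) → ℝ}
    {bform bup : Fin (m + 1) → Fin (m + 1) → (Fin (m + 1) → ℝ) → ℝ}
    {e : Fin s' → Fin (m + 1) → (Fin (m + 1) → ℝ) → ℝ}
    (hΓdiff : ∀ l j k, DifferentiableOn ℝ (Γ l j k) D)
    (hbdiff : ∀ j k, DifferentiableOn ℝ (bform j k) D)
    (hgauss : ∀ u ∈ D, ∀ j k : Fin (m + 1),
      pdv j (pdv k r) u = (∑ l, Γ l j k u • pdv l r u) + bform j k u • n u)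
    (hwein : ∀ u ∈ D, ∀ j : Fin (m + 1),
      pdv j n u = -(∑ l, bup l j u • pdv l r u) + ∑ q, e q j u • nhat q u)
    {u : Fin (m + 1) → ℝ} (hu : u ∈ D) (i j k : Fin (m + 1)) :
    pdv i (pdv j (pdv k r)) u =
      (∑ l, (pdv i (Γ l j k) u + (∑ p, Γ p j k u * Γ l p i u) - bform j k u * bup l i u) •
        pdv l r u)
      + (pdv i (bform j k) u + ∑ p, Γ p j k u * bform p i u) • n u
      + ∑ q, (bform j k u * e q i u) • nhat q u := by
  have hmem : D ∈ nhds u := hD.mem_nhds hu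
  have hrC : ContDiffAt ℝ 3 r u := (hr u hu).contDiffAt hmem
  have hgauss_nhds : pdv j (pdv k r) =ᶠ[nhds u]
      fun x => (∑ l, Γ l j k x • pdv l r x) + bform j k x • n x :=
    Filter.eventuallyEq_of_mem hmem fun x hx => hgauss x hx j k
  -- `∂_i g_p = ∂_p g_i` yields `Γ^l_{pi}` directly, without symmetry of `Γ` in its lower indices.
  have hgauss_swap : ∀ p, pdv i (pdv p r) u =
      (∑ l, Γ l p i u • pdv l r u) + bform p i u • n u := fun p => by
    rw [pdv_comm (hrC.of_le (by norm_num)), hgauss u hu]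
  rw [pdv_congr_of_eventuallyEq hgauss_nhds,
    pdv_sum_smul_add_smul (fun l => (hΓdiff l j k u hu).differentiableAt hmem)
      (fun l => (hrC.pdv (k := 2) (by norm_num) l).differentiableAt (by norm_num))
      ((hbdiff j k u hu).differentiableAt hmem)
      ((hn.differentiableOn (by norm_num) u hu).differentiableAt hmem),
    hwein u hu i]
  simp only [hgauss_swap, smul_add, smul_neg, Finset.smul_sum, smul_smul, add_smul, sub_smul,
    Finset.sum_add_distrib, Finset.sum_sub_distrib, Finset.sum_smul]
  conv_lhs => rw [Finset.sum_comm]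
  abel

theorem gauss_equation_general {m N s' : ℕ} (D : Set (Fin (m + 1) → ℝ)) (hD : IsOpen D)
    (r : (Fin (m + 1) → ℝ) → (Fin (N + 1) → ℝ)) (hr : ContDiffOn ℝ 3 r D)
    (n : (Fin (m + 1) → ℝ) → (Fin (N + 1) → ℝ)) (hn : ContDiffOn ℝ 2 n D)
    (nhat : Fin s' → (Fin (m + 1) → ℝ) → (Fin (N + 1) → ℝ))
    (Γ : Fin (m + 1) → Fin (m + 1) → Fin (m + 1) → (Fin (m + 1) → ℝ) → ℝ)
    (bform : Fin (m + 1) → Fin (m + 1) → (Fin (m + 1) → ℝ) → ℝ)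
    (bup : Fin (m + 1) → Fin (m + 1) → (Fin (m + 1) → ℝ) → ℝ)
    (e : Fin s' → Fin (m + 1) → (Fin (m + 1) → ℝ) → ℝ)
    (hΓdiff : ∀ l j k, DifferentiableOn ℝ (Γ l j k) D)
    (hbdiff : ∀ j k, DifferentiableOn ℝ (bform j k) D)
    -- Gauss formula
    (hgauss : ∀ u ∈ D, ∀ j k : Fin (m + 1),
      pdv j (pdv k r) u =
        (∑ l : Fin (m + 1), Γ l j k u • pdv l r u) + bform j k u • n u)
    -- Weingarten-type formula
    (hwein : ∀ u ∈ D, ∀ j : Fin (m + 1),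
      pdv j n u = -(∑ l : Fin (m + 1), bup l j u • pdv l r u) +
        ∑ q : Fin s', e q j u • nhat q u)
    -- pointwise linear independence of tangents, normal and auxiliary normals
    (hindep : ∀ u ∈ D, ∀ (a : Fin (m + 1) → ℝ) (β : ℝ) (γc : Fin s' → ℝ),
      (∑ l : Fin (m + 1), a l • pdv l r u) + β • n u +
        (∑ q : Fin s', γc q • nhat q u) = 0 → a = 0 ∧ β = 0 ∧ γc = 0) :
    ∀ u ∈ D, ∀ i j k l : Fin (m + 1),
      pdv i (Γ l j k) u - pdv j (Γ l i k) u +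
        (∑ p : Fin (m + 1), Γ p j k u * Γ l p i u) -
        (∑ p : Fin (m + 1), Γ p i k u * Γ l p j u) =
      bform j k u * bup l i u - bform i k u * bup l j u := by
  intro u hu i j k l
  have hsymm : pdv i (pdv j (pdv k r)) u = pdv j (pdv i (pdv k r)) u :=
    pdv_comm (((hr u hu).contDiffAt (hD.mem_nhds hu)).pdv (by norm_num) k) i j
  rw [pdv_pdv_pdv_eq_frame hD hr hn hΓdiff hbdiff hgauss hwein hu,
    pdv_pdv_pdv_eq_frame hD hr hn hΓdiff hbdiff hgauss hwein hu] at hsymm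
  have htangent := congrFun (eq_of_frame_expansion_eq (hindep u hu) hsymm) l
  linarith

/-- The Gauss equation: equality of mixed third partial derivatives, the Gauss formula and
the Weingarten-type formula imply
`R^l_{ijk} = b_{jk} b_i^l − b_{ik} b_j^l`. -/
theorem gauss_equation {m N s' : ℕ} (D : Set (Fin (m + 1) → ℝ)) (hD : IsOpen D)
    (r : (Fin (m + 1) → ℝ) → (Fin (N + 1) → ℝ)) (hr : ContDiffOn ℝ 3 r D)
    (n : (Fin (m + 1) → ℝ) → (Fin (N + 1) → ℝ)) (hn : ContDiffOn ℝ 2 n D)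
    (nhat : Fin s' → (Fin (m + 1) → ℝ) → (Fin (N + 1) → ℝ))
    (Γ : Fin (m + 1) → Fin (m + 1) → Fin (m + 1) → (Fin (m + 1) → ℝ) → ℝ)
    (bform : Fin (m + 1) → Fin (m + 1) → (Fin (m + 1) → ℝ) → ℝ)
    (bup : Fin (m + 1) → Fin (m + 1) → (Fin (m + 1) → ℝ) → ℝ)
    (e : Fin s' → Fin (m + 1) → (Fin (m + 1) → ℝ) → ℝ)
    (ginv : Fin (m + 1) → Fin (m + 1) → (Fin (m + 1) → ℝ) → ℝ)
    (hΓdiff : ∀ l j k, DifferentiableOn ℝ (Γ l j k) D)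
    (hbdiff : ∀ j k, DifferentiableOn ℝ (bform j k) D)
    (hbup : ∀ u ∈ D, ∀ l j : Fin (m + 1),
      bup l j u = ∑ k : Fin (m + 1), bform j k u * ginv k l u)
    -- Gauss formula
    (hgauss : ∀ u ∈ D, ∀ j k : Fin (m + 1),
      pdv j (pdv k r) u =
        (∑ l : Fin (m + 1), Γ l j k u • pdv l r u) + bform j k u • n u)
    -- Weingarten-type formula
    (hwein : ∀ u ∈ D, ∀ j : Fin (m + 1),
      pdv j n u = -(∑ l : Fin (m + 1), bup l j u • pdv l r u) +
        ∑ q : Fin s', e q j u • nhat q u)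
    -- pointwise linear independence of tangents, normal and auxiliary normals
    (hindep : ∀ u ∈ D, ∀ (a : Fin (m + 1) → ℝ) (β : ℝ) (γc : Fin s' → ℝ),
      (∑ l : Fin (m + 1), a l • pdv l r u) + β • n u +
        (∑ q : Fin s', γc q • nhat q u) = 0 → a = 0 ∧ β = 0 ∧ γc = 0) :
    ∀ u ∈ D, ∀ i j k l : Fin (m + 1),
      pdv i (Γ l j k) u - pdv j (Γ l i k) u +
        (∑ p : Fin (m + 1), Γ p j k u * Γ l p i u) -
        (∑ p : Fin (m + 1), Γ p i k u * Γ l p j u) =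
      bform j k u * bup l i u - bform i k u * bup l j u :=
  gauss_equation_general D hD r hr n hn nhat Γ bform bup e hΓdiff hbdiff hgauss hwein hindep
end

section
/- Let M be a topological space with transitive relation ≪ and open futures I⁺(p), and suppose M is strongly causal: for each p and each neighborhood U of p there is a neighborhood V ⊆ U of p such that no causal curve meets V in a disconnected set of parameters (i.e., once a causal curve leaves V it never returns). Let K ⊆ M be compact (and first-countable/metrizable) and λ : ℝ → K a causal curve contained in K. Then there exists p ∈ K and a sequence s_j → +∞ with λ(s_j) → p, and p is a future endpoint of λ: for every neighborhood U of p there is s₀ with λ(s) ∈ U for all s > s₀. -/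
/-!
By compactness of `K`, the curve `λ` has a cluster point `p` as `s → ∞`. Given a neighbourhood
`U` of `p`, strong causality provides a neighbourhood `V ⊆ U` of `p` whose preimage under `λ` is an
interval; since `λ` returns to `V` at arbitrarily late parameters, that interval is unbounded above,
so `λ` eventually stays in `V ⊆ U`. Hence `λ(s) → p`, in particular along `s_j = j`.
-/

open Filter Set Topology

theorem Set.OrdConnected.eventually_atTop_of_frequently {α : Type*} [LinearOrder α] [Nonempty α]
    {S : Set α} (hS : S.OrdConnected) (h : ∃ᶠ x in atTop, x ∈ S) : ∀ᶠ x in atTop, x ∈ S := by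
  obtain ⟨s₀, -, hs₀⟩ := frequently_atTop.1 h (Classical.arbitrary α)
  refine eventually_atTop.2 ⟨s₀, fun x hx => ?_⟩
  obtain ⟨t, hxt, ht⟩ := frequently_atTop.1 h x
  exact hS.out hs₀ ht ⟨hx, hxt⟩

section Causality

variable {M : Type*} [TopologicalSpace M]

def IsCausalCurve (le : M → M → Prop) (γ : ℝ → M) : Prop :=
  ∀ s t : ℝ, s ≤ t → le (γ s) (γ t)

def StronglyCausal (le : M → M → Prop) : Prop :=
  ∀ p : M, ∀ U ∈ 𝓝 p, ∃ V ∈ 𝓝 p, V ⊆ U ∧ ∀ γ : ℝ → M, IsCausalCurve le γ → (γ ⁻¹' V).OrdConnected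

theorem StronglyCausal.tendsto_of_mapClusterPt {le : M → M → Prop} (h : StronglyCausal le)
    {γ : ℝ → M} (hγ : IsCausalCurve le γ) {p : M} (hp : MapClusterPt p atTop γ) :
    Tendsto γ atTop (𝓝 p) := by
  intro U hU
  obtain ⟨V, hV, hVU, hord⟩ := h p U hU
  have hfreq : ∃ᶠ s in atTop, s ∈ γ ⁻¹' V := hp.frequently hV
  exact ((hord γ hγ).eventually_atTop_of_frequently hfreq).mono fun _ hs => hVU hs

end Causality

theorem causal_curve_in_compact_has_endpoint_general {M : Type*} [TopologicalSpace M]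
    (le : M → M → Prop)
    (hstrong : ∀ p : M, ∀ U ∈ nhds p, ∃ V ∈ nhds p, V ⊆ U ∧
      ∀ γ : ℝ → M, (∀ s t : ℝ, s ≤ t → le (γ s) (γ t)) → (γ ⁻¹' V).OrdConnected)
    (K : Set M) (hK : IsCompact K) (lam : ℝ → M)
    (hcausal : ∀ s t : ℝ, s ≤ t → le (lam s) (lam t))
    (himg : ∀ s : ℝ, lam s ∈ K) :
    ∃ p ∈ K,
      (∃ s : ℕ → ℝ, StrictMono s ∧ Tendsto s atTop atTop ∧
        Tendsto (fun j => lam (s j)) atTop (nhds p)) ∧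
      ∀ U : Set M, IsOpen U → p ∈ U → ∃ s₀ : ℝ, ∀ s > s₀, lam s ∈ U := by
  obtain ⟨p, hpK, hcluster⟩ :=
    hK.exists_mapClusterPt_of_frequently (l := atTop) (Frequently.of_forall himg)
  have hlim : Tendsto lam atTop (𝓝 p) :=
    StronglyCausal.tendsto_of_mapClusterPt hstrong hcausal hcluster
  refine ⟨p, hpK, ⟨(↑), Nat.strictMono_cast, tendsto_natCast_atTop_atTop,
    hlim.comp tendsto_natCast_atTop_atTop⟩, fun U hU hpU => ?_⟩
  obtain ⟨s₀, hs₀⟩ := eventually_atTop.1 (hlim (hU.mem_nhds hpU))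
  exact ⟨s₀, fun s hs => hs₀ s hs.le⟩

/-- In a strongly causal space-time, a causal curve contained in a compact (first-countable)
set has a future endpoint, obtained as a limit of `λ(s_j)` with `s_j → ∞`. -/
theorem causal_curve_in_compact_has_endpoint {M : Type*} [TopologicalSpace M]
    [FirstCountableTopology M]
    (lt le : M → M → Prop)
    (hlt_trans : ∀ p q r, lt p q → lt q r → lt p r)
    (hle_trans : ∀ p q r, le p q → le q r → le p r)
    (hopen : ∀ p : M, IsOpen {q | lt p q})
    (hstrong : ∀ p : M, ∀ U ∈ nhds p, ∃ V ∈ nhds p, V ⊆ U ∧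
      ∀ γ : ℝ → M, (∀ s t : ℝ, s ≤ t → le (γ s) (γ t)) → (γ ⁻¹' V).OrdConnected)
    (K : Set M) (hK : IsCompact K) (lam : ℝ → M)
    (hcausal : ∀ s t : ℝ, s ≤ t → le (lam s) (lam t))
    (himg : ∀ s : ℝ, lam s ∈ K) :
    ∃ p ∈ K,
      (∃ s : ℕ → ℝ, StrictMono s ∧ Tendsto s atTop atTop ∧
        Tendsto (fun j => lam (s j)) atTop (nhds p)) ∧
      ∀ U : Set M, IsOpen U → p ∈ U → ∃ s₀ : ℝ, ∀ s > s₀, lam s ∈ U :=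
  causal_curve_in_compact_has_endpoint_general le hstrong K hK lam hcausal himg
end
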